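/- In the two-group factor-model setup, suppose α₁ > α₂, p₁(n)/p₂(n) → ∞, and a_{2,p₂(n)} / a_{1,p₁(n)} → a for some constant a > 0. Then, for every x > 0, P(Q_{p₁(n), p₂(n)} ≤ a_{2,p₂(n)} x) → Ψ_{α₁}(a x) · Ψ_{α₂}(x) as n → ∞. (Proposition 2, Case 3, second subcase.) -/

import Mathlib

open MeasureTheory ProbabilityTheory Filter

noncomputable section

/-- The Fréchet distribution function with tail index `α`. -/
def frechetCDF (α x : ℝ) : ℝ := if 0 < x then Real.exp (-x ^ (-α)) else 0

/-- The norming constant `a_p = (Σ_{i<p} σ_i^α)^{1/α}`. -/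
def normConst (σ : ℕ → ℝ) (α : ℝ) (p : ℕ) : ℝ :=
  (∑ i ∈ Finset.range p, σ i ^ α) ^ (1 / α)

/-- Maximum of the first `p₁` variables of the first group and the first `p₂`
variables of the second group. -/
def Qmax {Ω : Type*} (X₁ X₂ : ℕ → Ω → ℝ) (p₁ p₂ : ℕ) (ω : Ω) : ℝ :=
  max (⨆ i : Fin p₁, X₁ i ω) (⨆ j : Fin p₂, X₂ j ω)

/-- Codomains of the family consisting of the factor `Z` and the two noise arrays. -/
def mixCodom (d : ℕ) : Unit ⊕ ℕ ⊕ ℕ → Type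
  | Sum.inl _ => Fin d → ℝ
  | Sum.inr _ => ℝ

instance mixCodomMeasurableSpace (d : ℕ) : ∀ i, MeasurableSpace (mixCodom d i)
  | Sum.inl _ => inferInstanceAs (MeasurableSpace (Fin d → ℝ))
  | Sum.inr (Sum.inl _) => inferInstanceAs (MeasurableSpace ℝ)
  | Sum.inr (Sum.inr _) => inferInstanceAs (MeasurableSpace ℝ)

/-- The family consisting of the factor `Z` and the two noise arrays. -/
def mixFun {Ω : Type*} {d : ℕ} (Z : Ω → Fin d → ℝ) (ε₁ ε₂ : ℕ → Ω → ℝ) :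
    ∀ i : Unit ⊕ ℕ ⊕ ℕ, Ω → mixCodom d i
  | Sum.inl _ => Z
  | Sum.inr (Sum.inl i) => ε₁ i
  | Sum.inr (Sum.inr j) => ε₂ j

/-!
Conditionally on the factor `Z` the noises are independent, so with `F̄ₖ(u) = P(εₖ > u)`,
`P(Q ≤ t) = E[∏ᵢ (1 - F̄₁((t - fᵢ(Z))/σᵢ)) · ∏ⱼ (1 - F̄₂((t - gⱼ(Z))/σ̃ⱼ))]`.
For fixed `Z` the shifts `fᵢ(Z)`, `gⱼ(Z)` are bounded, so at `t = a_{2,p₂} x → ∞` the tail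
asymptotics give `F̄₁((t - fᵢ(Z))/σᵢ) = (1 + o(1)) (σᵢ/t)^{α₁}` uniformly in `i`; since
`∑ᵢ (σᵢ/t)^{α₁} = (a_{1,p₁}/t)^{α₁} → (a x)^{-α₁}` and all factors tend to `1` uniformly, the
first product tends to `exp(-(a x)^{-α₁}) = Ψ_{α₁}(a x)`, and likewise the second one to
`Ψ_{α₂}(x)`. Dominated convergence then passes to the expectation.
-/

open Finset Function Real Topology

section Asymptotics

variable {κ ι : Type*} {l : Filter κ}

theorem tendsto_sum_of_abs_sub_le_mul {s : κ → Finset ι} {v w η : κ → ι → ℝ} {L : ℝ}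
    (hw : ∀ᶠ n in l, ∀ i, 0 ≤ w n i) (hvw : ∀ᶠ n in l, ∀ i, |v n i - w n i| ≤ η n i * w n i)
    (hη : Tendsto (uncurry η) (l ×ˢ ⊤) (𝓝 0))
    (hsum : Tendsto (fun n => ∑ i ∈ s n, w n i) l (𝓝 L)) :
    Tendsto (fun n => ∑ i ∈ s n, v n i) l (𝓝 L) := by
  suffices Tendsto (fun n => ∑ i ∈ s n, v n i - ∑ i ∈ s n, w n i) l (𝓝 0) by
    simpa using this.add hsum
  rw [Metric.tendsto_nhds]
  intro ε hε
  set δ := ε / (|L| + 2)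
  have hδ : 0 < δ := by positivity
  have hδε : δ * (|L| + 1) < ε := by
    rw [div_mul_eq_mul_div, div_lt_iff₀ (by positivity)]; nlinarith [abs_nonneg L]
  filter_upwards [hw, hvw, Filter.mem_prod_top.1 (hη.eventually (ge_mem_nhds hδ)),
    hsum.eventually (ge_mem_nhds (lt_of_le_of_lt (le_abs_self L) (lt_add_one |L|)))]
    with n hw hvw hη hS
  rw [Real.dist_eq, sub_zero, ← sum_sub_distrib]
  calc |∑ i ∈ s n, (v n i - w n i)| ≤ ∑ i ∈ s n, |v n i - w n i| := abs_sum_le_sum_abs _ _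
    _ ≤ ∑ i ∈ s n, δ * w n i :=
        sum_le_sum fun i _ => (hvw i).trans (mul_le_mul_of_nonneg_right (hη i) (hw i))
    _ = δ * ∑ i ∈ s n, w n i := (mul_sum _ _ _).symm
    _ ≤ δ * (|L| + 1) := by gcongr
    _ < ε := hδε

theorem tendsto_prod_one_sub_of_tendsto_sum {s : κ → Finset ι} {x : κ → ι → ℝ} {L : ℝ}
    (hx₀ : ∀ n i, 0 ≤ x n i) (hx : Tendsto (uncurry x) (l ×ˢ ⊤) (𝓝 0))
    (hsum : Tendsto (fun n => ∑ i ∈ s n, x n i) l (𝓝 L)) :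
    Tendsto (fun n => ∏ i ∈ s n, (1 - x n i)) l (𝓝 (exp (-L))) := by
  have hsmall : ∀ᶠ n in l, ∀ i, x n i ≤ 1 / 2 :=
    Filter.mem_prod_top.1 (hx.eventually (ge_mem_nhds (by norm_num)))
  have h2x : Tendsto (uncurry fun n i => 2 * x n i) (l ×ˢ ⊤) (𝓝 0) := by
    have h := hx.const_mul (2 : ℝ)
    rw [mul_zero] at h
    exact h
  -- `|log (1 - x) + x| ≤ x ^ 2 / (1 - x) ≤ 2 x · x` for `0 ≤ x ≤ 1 / 2`
  have hlog : Tendsto (fun n => ∑ i ∈ s n, -log (1 - x n i)) l (𝓝 L) := by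
    refine tendsto_sum_of_abs_sub_le_mul (Filter.Eventually.of_forall fun n => hx₀ n) ?_ h2x hsum
    filter_upwards [hsmall] with n hn i
    have hxi : |x n i| < 1 := by rw [abs_of_nonneg (hx₀ n i)]; linarith [hn i]
    have h := abs_log_sub_add_sum_range_le hxi 1
    simp only [range_one, sum_singleton, zero_add, pow_one, Nat.cast_zero, div_one,
      abs_of_nonneg (hx₀ n i), one_add_one_eq_two] at h
    rw [← abs_neg, neg_sub, sub_neg_eq_add]
    refine h.trans ?_
    rw [div_le_iff₀ (by linarith [hn i])]
    nlinarith [hn i, hx₀ n i]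
  refine ((continuous_exp.tendsto _).comp hlog.neg).congr' ?_
  filter_upwards [hsmall] with n hn
  simp only [comp_apply, ← sum_neg_distrib, neg_neg, exp_sum]
  exact prod_congr rfl fun i _ => exp_log (by linarith [hn i])

theorem tendsto_uncurry_sub_div_atTop {C M : ℝ} (hC : 0 < C) {σ c : ℕ → ℝ}
    (hσ : ∀ i, σ i ∈ Set.Ioc 0 C) (hc : ∀ i, |c i| ≤ M) {t : κ → ℝ} (ht : Tendsto t l atTop) :
    Tendsto (uncurry fun n i => (t n - c i) / σ i) (l ×ˢ ⊤) atTop := by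
  refine tendsto_atTop_mono' _ ?_
    (((tendsto_atTop_add_const_right _ (-M) ht).atTop_div_const hC).comp tendsto_fst)
  filter_upwards [(ht.eventually_ge_atTop M).prod_inl ⊤] with ⟨n, i⟩ (hn : M ≤ t n)
  calc (t n + -M) / C ≤ (t n - M) / σ i :=
        div_le_div_of_nonneg_left (by linarith) (hσ i).1 (hσ i).2
    _ ≤ (t n - c i) / σ i := by gcongr; exacts [(hσ i).1.le, (abs_le.1 (hc i)).2]

theorem tendsto_uncurry_div_atTop_zero {M : ℝ} {c : ℕ → ℝ} (hc : ∀ i, |c i| ≤ M) {t : κ → ℝ}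
    (ht : Tendsto t l atTop) : Tendsto (uncurry fun n i => c i / t n) (l ×ˢ ⊤) (𝓝 0) := by
  refine squeeze_zero_norm' ?_ (((tendsto_const_nhds (x := M)).div_atTop ht).comp tendsto_fst)
  filter_upwards [(ht.eventually_gt_atTop 0).prod_inl ⊤] with ⟨n, i⟩ (hn : 0 < t n)
  simp only [uncurry_apply_pair, comp_apply, norm_div, Real.norm_eq_abs, abs_of_pos hn]
  exact div_le_div_of_nonneg_right (hc i) hn.le

theorem normConst_div_rpow {σ : ℕ → ℝ} (hσ : ∀ i, 0 ≤ σ i) {α : ℝ} (hα : α ≠ 0) (p : ℕ)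
    {t : ℝ} (ht : 0 < t) : (normConst σ α p / t) ^ α = ∑ i ∈ range p, (σ i / t) ^ α := by
  have hsum : 0 ≤ ∑ i ∈ range p, σ i ^ α := sum_nonneg fun i _ => rpow_nonneg (hσ i) α
  rw [normConst, one_div, div_rpow (rpow_nonneg hsum _) ht.le, rpow_inv_rpow hsum hα, sum_div]
  exact sum_congr rfl fun i _ => (div_rpow (hσ i) ht.le α).symm

theorem tendsto_normConst_atTop {σ : ℕ → ℝ} {α C : ℝ} (hα : 0 < α) (hC : 0 < C)
    (hσ : ∀ i, C ≤ σ i) {p : κ → ℕ} (hp : Tendsto (fun n => (p n : ℝ)) l atTop) :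
    Tendsto (fun n => normConst σ α (p n)) l atTop := by
  refine tendsto_atTop_mono (fun n => ?_)
    (((tendsto_rpow_atTop (one_div_pos.2 hα)).comp hp).atTop_mul_const hC)
  have hsum : (p n : ℝ) * C ^ α ≤ ∑ i ∈ range (p n), σ i ^ α := by
    simpa using sum_le_sum fun i (_ : i ∈ range (p n)) => rpow_le_rpow hC.le (hσ i) hα.le
  calc (p n : ℝ) ^ (1 / α) * C = ((p n : ℝ) * C ^ α) ^ (1 / α) := by
        rw [mul_rpow (by positivity) (by positivity), ← rpow_mul hC.le, mul_one_div_cancel hα.ne',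
          rpow_one]
    _ ≤ normConst σ α (p n) := rpow_le_rpow (by positivity) hsum (by positivity)

theorem tendsto_sum_tail {s : ℝ → ℝ} {α C M b : ℝ} (hα : 0 < α) (hC : 0 < C)
    (htail : Tendsto (fun u => u ^ α * s u) atTop (𝓝 1)) {σ c : ℕ → ℝ}
    (hσ : ∀ i, σ i ∈ Set.Ioc 0 C) (hc : ∀ i, |c i| ≤ M) {t : κ → ℝ} (ht : Tendsto t l atTop)
    {p : κ → ℕ} (hb : Tendsto (fun n => normConst σ α (p n) / t n) l (𝓝 b)) :
    Tendsto (fun n => ∑ i ∈ range (p n), s ((t n - c i) / σ i)) l (𝓝 (b ^ α)) := by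
  -- with `u = (t - c) / σ`, `s u = (σ / t) ^ α * ρ` and `ρ → 1` uniformly in `i`
  set ρ : κ → ℕ → ℝ := fun n i =>
    (1 - c i / t n)⁻¹ ^ α * (((t n - c i) / σ i) ^ α * s ((t n - c i) / σ i))
  have hρ : Tendsto (uncurry ρ) (l ×ˢ ⊤) (𝓝 1) := by
    have h := (((tendsto_const_nhds.sub (tendsto_uncurry_div_atTop_zero hc ht)).inv₀
      (by norm_num : (1 : ℝ) - 0 ≠ 0)).rpow_const (Or.inr hα.le)).mul
      (htail.comp (tendsto_uncurry_sub_div_atTop hC hσ hc ht))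
    rw [sub_zero, inv_one, one_rpow, one_mul] at h
    exact h
  refine tendsto_sum_of_abs_sub_le_mul (w := fun n i => (σ i / t n) ^ α)
    (η := fun n i => |ρ n i - 1|) ?_ ?_ ?_ ?_
  · filter_upwards [ht.eventually_gt_atTop 0] with n hn i
    exact rpow_nonneg (div_nonneg (hσ i).1.le hn.le) α
  · filter_upwards [ht.eventually_gt_atTop M, ht.eventually_gt_atTop 0] with n hM hn i
    have hσi := (hσ i).1
    have htc : 0 < t n - c i := by linarith [(abs_le.1 (hc i)).2]
    have hinv : 0 ≤ (1 - c i / t n)⁻¹ :=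
      inv_nonneg.2 (by rw [sub_nonneg, div_le_one hn]; linarith)
    have hu : 0 ≤ (t n - c i) / σ i := div_nonneg htc.le hσi.le
    have hw : 0 ≤ σ i / t n := div_nonneg hσi.le hn.le
    have hv : s ((t n - c i) / σ i) = (σ i / t n) ^ α * ρ n i := by
      have hone : (σ i / t n * ((1 - c i / t n)⁻¹ * ((t n - c i) / σ i))) ^ α = 1 := by
        field_simp [htc.ne']
        rw [one_rpow]
      rw [mul_rpow hw (mul_nonneg hinv hu), mul_rpow hinv hu] at hone
      simp only [ρ, ← mul_assoc] at hone ⊢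
      rw [hone, one_mul]
    rw [hv, ← mul_sub_one, abs_mul, abs_of_nonneg (rpow_nonneg hw α), mul_comm]
  · have h := (hρ.sub_const 1).abs
    rwa [sub_self, abs_zero] at h
  · refine (hb.rpow_const (Or.inr hα.le)).congr' ?_
    filter_upwards [ht.eventually_gt_atTop 0] with n hn
    exact normConst_div_rpow (fun i => (hσ i).1.le) hα.ne' (p n) hn

end Asymptotics

theorem Qmax_le_iff {Ω : Type*} {X₁ X₂ : ℕ → Ω → ℝ} {m k : ℕ} (hm : 0 < m) (hk : 0 < k)
    (ω : Ω) (t : ℝ) : Qmax X₁ X₂ m k ω ≤ t ↔ (∀ i < m, X₁ i ω ≤ t) ∧ ∀ j < k, X₂ j ω ≤ t := by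
  have : Nonempty (Fin m) := ⟨⟨0, hm⟩⟩
  have : Nonempty (Fin k) := ⟨⟨0, hk⟩⟩
  simp only [Qmax, max_le_iff, ciSup_le_iff (Set.finite_range _).bddAbove, Fin.forall_iff]

theorem frechetCDF_eq_exp_neg_inv_rpow (α : ℝ) {x : ℝ} (hx : 0 < x) :
    frechetCDF α x = exp (-x⁻¹ ^ α) := by
  rw [frechetCDF, if_pos hx, inv_rpow hx.le, rpow_neg hx.le]

section Probability

variable {Ω β : Type*} [MeasurableSpace Ω] [MeasurableSpace β] {μ : Measure Ω}

/-- `P(max_{i < p} (c i + σ i * εᵢ) ≤ t)` for independent copies `εᵢ` of `ε`. -/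
def groupMaxCDF (μ : Measure Ω) (ε : Ω → ℝ) (σ c : ℕ → ℝ) (p : ℕ) (t : ℝ) : ℝ :=
  ∏ i ∈ range p, (1 - μ.real {ω | (t - c i) / σ i < ε ω})

theorem groupMaxCDF_mem_Icc (μ : Measure Ω) [IsProbabilityMeasure μ] (ε : Ω → ℝ) (σ c : ℕ → ℝ)
    (p : ℕ) (t : ℝ) : groupMaxCDF μ ε σ c p t ∈ Set.Icc 0 1 :=
  ⟨prod_nonneg fun _ _ => sub_nonneg.2 measureReal_le_one,
    prod_le_one (fun _ _ => sub_nonneg.2 measureReal_le_one)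
      fun _ _ => sub_le_self _ measureReal_nonneg⟩

theorem measurable_groupMaxCDF (μ : Measure Ω) [IsFiniteMeasure μ] (ε : Ω → ℝ) (σ : ℕ → ℝ)
    {c : ℕ → β → ℝ} (hc : ∀ i, Measurable (c i)) (p : ℕ) (t : ℝ) :
    Measurable fun z => groupMaxCDF μ ε σ (fun i => c i z) p t := by
  have htail : Measurable fun u => μ.real {ω | u < ε ω} :=
    Antitone.measurable fun u v huv => measureReal_mono fun ω (h : v < ε ω) => huv.trans_lt h
  exact Finset.measurable_prod _ fun i _ =>
    measurable_const.sub (htail.comp ((measurable_const.sub (hc i)).div_const _))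

theorem tendsto_groupMaxCDF {κ : Type*} {l : Filter κ} (μ : Measure Ω) {ε : Ω → ℝ}
    {α C M b : ℝ} (hα : 0 < α) (hC : 0 < C)
    (htail : Tendsto (fun u => u ^ α * μ.real {ω | u < ε ω}) atTop (𝓝 1))
    {σ c : ℕ → ℝ} (hσ : ∀ i, σ i ∈ Set.Ioc 0 C) (hc : ∀ i, |c i| ≤ M) {t : κ → ℝ}
    (ht : Tendsto t l atTop) {p : κ → ℕ}
    (hb : Tendsto (fun n => normConst σ α (p n) / t n) l (𝓝 b)) :
    Tendsto (fun n => groupMaxCDF μ ε σ c (p n) (t n)) l (𝓝 (exp (-b ^ α))) := by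
  have htail₀ : Tendsto (fun u => μ.real {ω | u < ε ω}) atTop (𝓝 0) := by
    have h := htail.mul (tendsto_rpow_neg_atTop hα)
    rw [one_mul] at h
    refine h.congr' ?_
    filter_upwards [eventually_gt_atTop 0] with u hu
    rw [mul_right_comm, ← rpow_add hu, add_neg_cancel, rpow_zero, one_mul]
  exact tendsto_prod_one_sub_of_tendsto_sum (fun _ _ => measureReal_nonneg)
    (htail₀.comp (tendsto_uncurry_sub_div_atTop hC hσ hc ht))
    (tendsto_sum_tail hα hC htail hσ hc ht hb)

theorem tendsto_integral_groupMaxCDF_mul [IsProbabilityMeasure μ] {Z : Ω → β} (hZ : Measurable Z)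
    {f g : ℕ → β → ℝ} (hf : ∀ i, Measurable (f i)) (hg : ∀ j, Measurable (g j)) {ε ε' : Ω → ℝ}
    {σ σ' : ℕ → ℝ} {p p' : ℕ → ℕ} {t : ℕ → ℝ} {L : ℝ}
    (hlim : ∀ᵐ ω ∂μ, Tendsto (fun n => groupMaxCDF μ ε σ (fun i => f i (Z ω)) (p n) (t n) *
      groupMaxCDF μ ε' σ' (fun j => g j (Z ω)) (p' n) (t n)) atTop (𝓝 L)) :
    Tendsto (fun n => ∫ ω, groupMaxCDF μ ε σ (fun i => f i (Z ω)) (p n) (t n) *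
      groupMaxCDF μ ε' σ' (fun j => g j (Z ω)) (p' n) (t n) ∂μ) atTop (𝓝 L) := by
  have hbound (n : ℕ) (ω : Ω) : ‖groupMaxCDF μ ε σ (fun i => f i (Z ω)) (p n) (t n) *
      groupMaxCDF μ ε' σ' (fun j => g j (Z ω)) (p' n) (t n)‖ ≤ 1 := by
    have h₁ := groupMaxCDF_mem_Icc μ ε σ (fun i => f i (Z ω)) (p n) (t n)
    have h₂ := groupMaxCDF_mem_Icc μ ε' σ' (fun j => g j (Z ω)) (p' n) (t n)
    rw [Real.norm_eq_abs, abs_of_nonneg (mul_nonneg h₁.1 h₂.1)]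
    exact mul_le_one₀ h₁.2 h₂.1 h₂.2
  have h := tendsto_integral_of_dominated_convergence _
    (fun n => (((measurable_groupMaxCDF μ ε σ hf _ _).mul
      (measurable_groupMaxCDF μ ε' σ' hg _ _)).comp hZ).aestronglyMeasurable)
    (integrable_const 1) (fun n => ae_of_all _ (hbound n)) hlim
  rwa [integral_const, probReal_univ, one_smul] at h

theorem ProbabilityTheory.IndepFun.measure_preimage_prodMk_eq_lintegral [IsFiniteMeasure μ]
    {γ : Type*} [MeasurableSpace γ] {X : Ω → β} {Y : Ω → γ} (hXY : IndepFun X Y μ)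
    (hX : Measurable X) (hY : Measurable Y) {E : Set (β × γ)} (hE : MeasurableSet E) :
    μ ((fun ω => (X ω, Y ω)) ⁻¹' E) = ∫⁻ ω, μ (Y ⁻¹' (Prod.mk (X ω) ⁻¹' E)) ∂μ := by
  rw [← Measure.map_apply (hX.prodMk hY) hE,
    hXY.map_prod_eq_prod_map_map hX.aemeasurable hY.aemeasurable, Measure.prod_apply hE,
    lintegral_map (measurable_measure_prodMk_left hE) hX]
  exact lintegral_congr fun ω => Measure.map_apply hY (measurable_prodMk_left hE)

theorem measureReal_forall_le_eq_integral [IsProbabilityMeasure μ] {ι : Type*} {Z : Ω → β}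
    {η : ι → Ω → ℝ} (hZ : Measurable Z) (hη : ∀ i, Measurable (η i))
    (hZη : IndepFun Z (fun ω i => η i ω) μ) (hiid : iIndepFun η μ) {h : ι → β → ℝ}
    (hh : ∀ i, Measurable (h i)) (S : Finset ι) :
    μ.real {ω | ∀ i ∈ S, η i ω ≤ h i (Z ω)} =
      ∫ ω, ∏ i ∈ S, μ.real {ω' | η i ω' ≤ h i (Z ω)} ∂μ := by
  have hE : MeasurableSet {q : β × (ι → ℝ) | ∀ i ∈ S, q.2 i ≤ h i q.1} := by
    simp only [Set.ofPred_forall]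
    exact Finset.measurableSet_biInter _ fun i _ =>
      measurableSet_le (measurable_pi_apply i |>.comp measurable_snd) ((hh i).comp measurable_fst)
  have hcdf : Measurable fun ω => ∏ i ∈ S, μ {ω' | η i ω' ≤ h i (Z ω)} :=
    Finset.measurable_prod _ fun i _ =>
      (Monotone.measurable fun u v huv => measure_mono fun ω (h : η i ω ≤ u) => h.trans huv).comp
        ((hh i).comp hZ)
  have hslice (z : β) :
      μ {ω | ∀ i ∈ S, η i ω ≤ h i z} = ∏ i ∈ S, μ {ω | η i ω ≤ h i z} := by
    rw [show {ω | ∀ i ∈ S, η i ω ≤ h i z} = ⋂ i ∈ S, η i ⁻¹' Set.Iic (h i z) by ext; simp]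
    exact hiid.meas_biInter fun i _ => ⟨Set.Iic (h i z), measurableSet_Iic, rfl⟩
  calc μ.real {ω | ∀ i ∈ S, η i ω ≤ h i (Z ω)}
      = (∫⁻ ω, μ {ω' | ∀ i ∈ S, η i ω' ≤ h i (Z ω)} ∂μ).toReal := congrArg ENNReal.toReal
        (hZη.measure_preimage_prodMk_eq_lintegral hZ (measurable_pi_lambda _ hη) hE)
    _ = ∫ ω, ∏ i ∈ S, μ.real {ω' | η i ω' ≤ h i (Z ω)} ∂μ := by
      rw [lintegral_congr fun ω => hslice (Z ω), ← integral_toReal hcdf.aemeasurable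
        (ae_of_all _ fun ω => ENNReal.prod_lt_top fun i _ => measure_lt_top μ _)]
      simp only [ENNReal.toReal_prod, Measure.real]

theorem ProbabilityTheory.IdentDistrib.measureReal_le_eq_one_sub {Ω' : Type*}
    [MeasurableSpace Ω'] {μ' : Measure Ω'} [IsProbabilityMeasure μ] {X : Ω' → ℝ} {Y : Ω → ℝ}
    (h : IdentDistrib X Y μ' μ) (c : ℝ) : μ'.real {ω | X ω ≤ c} = 1 - μ.real {ω | c < Y ω} := by
  rw [← probReal_compl_eq_one_sub₀ (s := {ω | c < Y ω})
    (h.aemeasurable_snd.nullMeasurableSet_preimage measurableSet_Ioi), Set.compl_ofPred]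
  simp_rw [not_lt]
  exact congrArg ENNReal.toReal (h.measure_mem_eq measurableSet_Iic)

variable {d : ℕ} {Z : Ω → Fin d → ℝ} {ε₁ ε₂ : ℕ → Ω → ℝ}

theorem iIndepFun_sumElim_of_mixFun
    (hindep : iIndepFun (m := fun i => mixCodomMeasurableSpace d i) (mixFun Z ε₁ ε₂) μ) :
    iIndepFun (Sum.elim ε₁ ε₂) μ := by
  have h := (hindep.precomp Sum.inr_injective).comp (γ := fun _ => ℝ) (fun _ x => x)
    (by rintro (i | j) <;> exact measurable_id)
  convert h using 1
  funext k
  cases k <;> rfl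

theorem indepFun_sumElim_of_mixFun (hZ : Measurable Z) (hε₁ : ∀ i, Measurable (ε₁ i))
    (hε₂ : ∀ j, Measurable (ε₂ j))
    (hindep : iIndepFun (m := fun i => mixCodomMeasurableSpace d i) (mixFun Z ε₁ ε₂) μ) :
    IndepFun Z (fun ω k => Sum.elim ε₁ ε₂ k ω) μ := by
  have hmeas : ∀ i, Measurable (mixFun Z ε₁ ε₂ i) := by
    rintro (_ | i | j)
    exacts [hZ, hε₁ i, hε₂ j]
  have h := indep_iSup_of_disjoint (fun i => (hmeas i).comap_le) hindep.iIndep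
    (S := {Sum.inl ()}) (T := Set.range Sum.inr) (by simp)
  rw [IndepFun_iff_Indep]
  refine indep_of_indep_of_le_right (indep_of_indep_of_le_left h ?_) ?_
  · exact le_iSup₂_of_le (Sum.inl ()) rfl le_rfl
  · simp only [MeasurableSpace.pi, MeasurableSpace.comap_iSup, MeasurableSpace.comap_comp]
    refine iSup_le ?_
    rintro (i | j)
    · exact le_iSup₂_of_le (Sum.inr (Sum.inl i)) ⟨_, rfl⟩ le_rfl
    · exact le_iSup₂_of_le (Sum.inr (Sum.inr j)) ⟨_, rfl⟩ le_rfl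

theorem measureReal_Qmax_le_eq_integral [IsProbabilityMeasure μ] (hZ : Measurable Z)
    {f g : ℕ → (Fin d → ℝ) → ℝ} (hf : ∀ i, Measurable (f i)) (hg : ∀ j, Measurable (g j))
    {σ σt : ℕ → ℝ} (hσ : ∀ i, 0 < σ i) (hσt : ∀ j, 0 < σt j) (hε₁ : ∀ i, Measurable (ε₁ i))
    (hε₂ : ∀ j, Measurable (ε₂ j)) (hid₁ : ∀ i, IdentDistrib (ε₁ i) (ε₁ 0) μ μ)
    (hid₂ : ∀ j, IdentDistrib (ε₂ j) (ε₂ 0) μ μ)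
    (hindep : iIndepFun (m := fun i => mixCodomMeasurableSpace d i) (mixFun Z ε₁ ε₂) μ)
    {X₁ X₂ : ℕ → Ω → ℝ} (hX₁ : ∀ i ω, X₁ i ω = f i (Z ω) + σ i * ε₁ i ω)
    (hX₂ : ∀ j ω, X₂ j ω = g j (Z ω) + σt j * ε₂ j ω) {m k : ℕ} (hm : 0 < m) (hk : 0 < k)
    (t : ℝ) :
    μ.real {ω | Qmax X₁ X₂ m k ω ≤ t} = ∫ ω, groupMaxCDF μ (ε₁ 0) σ (fun i => f i (Z ω)) m t *
      groupMaxCDF μ (ε₂ 0) σt (fun j => g j (Z ω)) k t ∂μ := by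
  set h : ℕ ⊕ ℕ → (Fin d → ℝ) → ℝ :=
    Sum.elim (fun i z => (t - f i z) / σ i) (fun j z => (t - g j z) / σt j)
  have hh : ∀ i, Measurable (h i) := by
    rintro (i | j)
    exacts [(measurable_const.sub (hf i)).div_const _, (measurable_const.sub (hg j)).div_const _]
  have hevent : {ω | Qmax X₁ X₂ m k ω ≤ t} =
      {ω | ∀ i ∈ (range m).disjSum (range k), Sum.elim ε₁ ε₂ i ω ≤ h i (Z ω)} := by
    ext ω
    simp only [Set.mem_ofPred_eq, Qmax_le_iff hm hk, Sum.forall, inl_mem_disjSum, inr_mem_disjSum,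
      Sum.elim_inl, Sum.elim_inr, mem_range, h, le_div_iff₀ (hσ _), le_div_iff₀ (hσt _), hX₁, hX₂,
      le_sub_iff_add_le', mul_comm (ε₁ _ ω), mul_comm (ε₂ _ ω)]
  rw [hevent, measureReal_forall_le_eq_integral hZ (by rintro (i | j); exacts [hε₁ i, hε₂ j])
    (indepFun_sumElim_of_mixFun hZ hε₁ hε₂ hindep) (iIndepFun_sumElim_of_mixFun hindep) hh]
  refine integral_congr_ae (ae_of_all _ fun ω => ?_)
  simp only [prod_disjSum, Sum.elim_inl, Sum.elim_inr, groupMaxCDF, h,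
    (hid₁ _).measureReal_le_eq_one_sub, (hid₂ _).measureReal_le_eq_one_sub]

end Probability

theorem prop2_case3_sub2_general
    {Ω : Type*} [MeasurableSpace Ω] (P : Measure Ω) [IsProbabilityMeasure P]
    (d : ℕ) (Z : Ω → Fin d → ℝ) (hZm : Measurable Z)
    (f g : ℕ → (Fin d → ℝ) → ℝ) (hfm : ∀ i, Measurable (f i)) (hgm : ∀ j, Measurable (g j))
    (hfbdd : ∀ᵐ ω ∂P, ∃ M : ℝ, ∀ i, |f i (Z ω)| ≤ M)
    (hgbdd : ∀ᵐ ω ∂P, ∃ M : ℝ, ∀ j, |g j (Z ω)| ≤ M)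
    (C₁ C₂ : ℝ) (hC₁ : 0 < C₁) (hC₁₂ : C₁ ≤ C₂)
    (σ σt : ℕ → ℝ) (hσ : ∀ i, σ i ∈ Set.Icc C₁ C₂) (hσt : ∀ j, σt j ∈ Set.Icc C₁ C₂)
    (α₁ α₂ : ℝ) (hα₁ : 0 < α₁) (hα₂ : 0 < α₂)
    (ε₁ ε₂ : ℕ → Ω → ℝ) (hε₁m : ∀ i, Measurable (ε₁ i)) (hε₂m : ∀ j, Measurable (ε₂ j))
    (hid₁ : ∀ i, IdentDistrib (ε₁ i) (ε₁ 0) P P)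
    (hid₂ : ∀ j, IdentDistrib (ε₂ j) (ε₂ 0) P P)
    (hindep : iIndepFun (m := fun i => mixCodomMeasurableSpace d i) (mixFun Z ε₁ ε₂) P)
    (htail₁ : Tendsto (fun x : ℝ => x ^ α₁ * (P {ω | x < ε₁ 0 ω}).toReal) atTop (nhds 1))
    (htail₂ : Tendsto (fun x : ℝ => x ^ α₂ * (P {ω | x < ε₂ 0 ω}).toReal) atTop (nhds 1))
    (X₁ X₂ : ℕ → Ω → ℝ)
    (hX₁ : ∀ i ω, X₁ i ω = f i (Z ω) + σ i * ε₁ i ω)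
    (hX₂ : ∀ j ω, X₂ j ω = g j (Z ω) + σt j * ε₂ j ω)
    (p₁ p₂ : ℕ → ℕ) (hp₁pos : ∀ n, 0 < p₁ n) (hp₂pos : ∀ n, 0 < p₂ n)
    (hp₂ : Tendsto (fun n => (p₂ n : ℝ)) atTop atTop)
    (a : ℝ) (ha : 0 < a)
    (hnorm : Tendsto (fun n => normConst σt α₂ (p₂ n) / normConst σ α₁ (p₁ n)) atTop (nhds a)) :
    ∀ x : ℝ, 0 < x →
      Tendsto (fun n => (P {ω | Qmax X₁ X₂ (p₁ n) (p₂ n) ω ≤ normConst σt α₂ (p₂ n) * x}).toReal) atTop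
        (nhds (frechetCDF α₁ (a * x) * frechetCDF α₂ x)) := by
  intro x hx
  set t : ℕ → ℝ := fun n => normConst σt α₂ (p₂ n) * x
  have ha₂ := tendsto_normConst_atTop hα₂ hC₁ (fun j => (hσt j).1) hp₂
  have ht : Tendsto t atTop atTop := ha₂.atTop_mul_const hx
  have hb₁ : Tendsto (fun n => normConst σ α₁ (p₁ n) / t n) atTop (𝓝 (a * x)⁻¹) := by
    rw [mul_inv, ← div_eq_mul_inv]
    simpa only [t, inv_div, div_div] using (hnorm.inv₀ ha.ne').div_const x
  have hb₂ : Tendsto (fun n => normConst σt α₂ (p₂ n) / t n) atTop (𝓝 x⁻¹) := by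
    refine tendsto_const_nhds.congr' ?_
    filter_upwards [ha₂.eventually_gt_atTop 0] with n hn
    exact (div_mul_cancel_left₀ hn.ne' x).symm
  have hC₂ : 0 < C₂ := hC₁.trans_le hC₁₂
  have hσ' : ∀ i, σ i ∈ Set.Ioc 0 C₂ := fun i => ⟨hC₁.trans_le (hσ i).1, (hσ i).2⟩
  have hσt' : ∀ j, σt j ∈ Set.Ioc 0 C₂ := fun j => ⟨hC₁.trans_le (hσt j).1, (hσt j).2⟩
  refine (tendsto_integral_groupMaxCDF_mul hZm hfm hgm ?_).congr fun n =>
    (measureReal_Qmax_le_eq_integral hZm hfm hgm (fun i => (hσ' i).1) (fun j => (hσt' j).1)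
      hε₁m hε₂m hid₁ hid₂ hindep hX₁ hX₂ (hp₁pos n) (hp₂pos n) (t n)).symm
  filter_upwards [hfbdd, hgbdd] with ω ⟨M₁, hM₁⟩ ⟨M₂, hM₂⟩
  rw [frechetCDF_eq_exp_neg_inv_rpow α₁ (mul_pos ha hx), frechetCDF_eq_exp_neg_inv_rpow α₂ hx]
  exact (tendsto_groupMaxCDF P hα₁ hC₂ htail₁ hσ' hM₁ ht hb₁).mul
    (tendsto_groupMaxCDF P hα₂ hC₂ htail₂ hσt' hM₂ ht hb₂)

/-- Prop. 2, Case 3, second subcase: `α₁ > α₂`, `p₁/p₂ → ∞`, `a₂/a₁ → a > 0` imply `P(Q ≤ a₂ x) → Ψ_{α₁}(a x)·Ψ_{α₂}(x)` for all `x > 0`. -/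
theorem prop2_case3_sub2
    {Ω : Type*} [MeasurableSpace Ω] (P : Measure Ω) [IsProbabilityMeasure P]
    (d : ℕ) (Z : Ω → Fin d → ℝ) (hZm : Measurable Z)
    (f g : ℕ → (Fin d → ℝ) → ℝ) (hfm : ∀ i, Measurable (f i)) (hgm : ∀ j, Measurable (g j))
    (hfbdd : ∀ᵐ ω ∂P, ∃ M : ℝ, ∀ i, |f i (Z ω)| ≤ M)
    (hgbdd : ∀ᵐ ω ∂P, ∃ M : ℝ, ∀ j, |g j (Z ω)| ≤ M)
    (C₁ C₂ : ℝ) (hC₁ : 0 < C₁) (hC₁₂ : C₁ ≤ C₂)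
    (σ σt : ℕ → ℝ) (hσ : ∀ i, σ i ∈ Set.Icc C₁ C₂) (hσt : ∀ j, σt j ∈ Set.Icc C₁ C₂)
    (α₁ α₂ : ℝ) (hα₁ : 0 < α₁) (hα₂ : 0 < α₂)
    (ε₁ ε₂ : ℕ → Ω → ℝ) (hε₁m : ∀ i, Measurable (ε₁ i)) (hε₂m : ∀ j, Measurable (ε₂ j))
    (hid₁ : ∀ i, IdentDistrib (ε₁ i) (ε₁ 0) P P)
    (hid₂ : ∀ j, IdentDistrib (ε₂ j) (ε₂ 0) P P)
    (hindep : iIndepFun (m := fun i => mixCodomMeasurableSpace d i) (mixFun Z ε₁ ε₂) P)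
    (htail₁ : Tendsto (fun x : ℝ => x ^ α₁ * (P {ω | x < ε₁ 0 ω}).toReal) atTop (nhds 1))
    (htail₂ : Tendsto (fun x : ℝ => x ^ α₂ * (P {ω | x < ε₂ 0 ω}).toReal) atTop (nhds 1))
    (X₁ X₂ : ℕ → Ω → ℝ)
    (hX₁ : ∀ i ω, X₁ i ω = f i (Z ω) + σ i * ε₁ i ω)
    (hX₂ : ∀ j ω, X₂ j ω = g j (Z ω) + σt j * ε₂ j ω)
    (p₁ p₂ : ℕ → ℕ) (hp₁pos : ∀ n, 0 < p₁ n) (hp₂pos : ∀ n, 0 < p₂ n)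
    (hp₁ : Tendsto (fun n => (p₁ n : ℝ)) atTop atTop)
    (hp₂ : Tendsto (fun n => (p₂ n : ℝ)) atTop atTop)
    (hα : α₂ < α₁)
    (hratio : Tendsto (fun n => (p₁ n : ℝ) / (p₂ n : ℝ)) atTop atTop)
    (a : ℝ) (ha : 0 < a)
    (hnorm : Tendsto (fun n => normConst σt α₂ (p₂ n) / normConst σ α₁ (p₁ n)) atTop (nhds a)) :
    ∀ x : ℝ, 0 < x →
      Tendsto (fun n => (P {ω | Qmax X₁ X₂ (p₁ n) (p₂ n) ω ≤ normConst σt α₂ (p₂ n) * x}).toReal) atTop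
        (nhds (frechetCDF α₁ (a * x) * frechetCDF α₂ x)) :=
  prop2_case3_sub2_general P d Z hZm f g hfm hgm hfbdd hgbdd C₁ C₂ hC₁ hC₁₂ σ σt hσ hσt α₁ α₂ hα₁
    hα₂ ε₁ ε₂ hε₁m hε₂m hid₁ hid₂ hindep htail₁ htail₂ X₁ X₂ hX₁ hX₂ p₁ p₂ hp₁pos hp₂pos hp₂ a ha
    hnorm
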